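/- Let (L,[·,·]) be a Lie algebra over a field F of characteristic 0 with representation ρ: L → End(V), and let φ: L → V be a 1-cocycle of the Lie algebra cohomology, i.e. ρ(x)φ(y) − ρ(y)φ(x) − φ([x,y]) = 0 for all x,y ∈ L. Then φ is a 1-cocycle of the associated Lie triple system (L, [·,·,·] = [[·,·],·]; θ_ρ), i.e. D_ρ(x,y)φ(z) − θ_ρ(x,z)φ(y) + θ_ρ(y,z)φ(x) − φ([[x,y],z]) = 0 for all x,y,z ∈ L, where θ_ρ(x,y) := ρ(y)ρ(x) and D_ρ(x,y) := θ_ρ(y,x) − θ_ρ(x,y). -/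

import Mathlib

variable {F L V : Type*} [Field F] [CharZero F] [LieRing L] [LieAlgebra F L]
  [AddCommGroup V] [Module F V]

/-- `θ_ρ(x,y) := ρ(y)ρ(x)`, the representation of the associated Lie triple system. -/
def thetaRho (ρ : L →ₗ[F] Module.End F V) (x y : L) : Module.End F V := ρ y * ρ x

/-- `D_ρ(x,y) := θ_ρ(y,x) − θ_ρ(x,y)`. -/
def DRho (ρ : L →ₗ[F] Module.End F V) (x y : L) : Module.End F V :=
  thetaRho ρ y x - thetaRho ρ x y

namespace LieAlgebra.OneCocycle

variable {R A M : Type*} [CommRing R] [LieRing A] [LieAlgebra R A] [AddCommGroup M] [Module R M]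
  {ρ : A →ₗ[R] Module.End R M} {φ : A →ₗ[R] M}

theorem map_lie_eq (hcoc : ∀ x y : A, ρ x (φ y) - ρ y (φ x) - φ ⁅x, y⁆ = 0) (x y : A) :
    φ ⁅x, y⁆ = ρ x (φ y) - ρ y (φ x) :=
  (sub_eq_zero.mp (hcoc x y)).symm

theorem map_lie_lie_eq (hρ : ∀ x y, ρ ⁅x, y⁆ = ρ x * ρ y - ρ y * ρ x)
    (hcoc : ∀ x y : A, ρ x (φ y) - ρ y (φ x) - φ ⁅x, y⁆ = 0) (x y z : A) :
    φ ⁅⁅x, y⁆, z⁆ = (ρ x * ρ y - ρ y * ρ x) (φ z) - ρ z (ρ x (φ y) - ρ y (φ x)) := by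
  rw [map_lie_eq hcoc, map_lie_eq hcoc x y, hρ]

end LieAlgebra.OneCocycle

/-- a Lie algebra `1`-cocycle `φ : L → V` is a `1`-cocycle of the associated
Lie triple system `(L, [[·,·],·]; θ_ρ)`. -/
theorem lie_one_cocycle_to_lts_one_cocycle
    (ρ : L →ₗ[F] Module.End F V)
    (hρ : ∀ x y, ρ ⁅x, y⁆ = ρ x * ρ y - ρ y * ρ x)
    (φ : L →ₗ[F] V)
    (hcoc : ∀ x y : L, ρ x (φ y) - ρ y (φ x) - φ ⁅x, y⁆ = 0) :
    ∀ x y z : L,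
      DRho ρ x y (φ z) - thetaRho ρ x z (φ y) + thetaRho ρ y z (φ x)
        - φ ⁅⁅x, y⁆, z⁆ = 0 := by
  intro x y z
  rw [LieAlgebra.OneCocycle.map_lie_lie_eq hρ hcoc]
  simp only [DRho, thetaRho, LinearMap.sub_apply, Module.End.mul_apply, map_sub]
  abel
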